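/- arXiv:1701.04634 — 5 statements merged into one kernel-verified Lean document; each statement's English description precedes it below -/
import Mathlib

section
/- Let G be a circular-arc graph with a fixed circular-arc model in which the arcs cover the whole circle, and let S ⊆ V(G). Suppose every vertex of G is adjacent to at least one vertex of S, and suppose no minimal set of arcs covering the whole circle induces an S-cycle. Then every induced S-cycle of G is contained in the set A_i of arcs containing some single point i of the circle. -/
/-!
Suppose a chordless `S`-cycle `c` had arcs with no common point. If a vertex of `c` and its two
cycle-neighbours had a common point, the neighbours would be adjacent, hence consecutive on the
chordless cycle, so `c` would be that triangle and the point would lie on all of its arcs.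
This rules out both ways in which the vertex set of `c` could fail to be a minimal cover.
If the arcs of `c` missed a point, cutting the circle there turns them into intervals, and the
left endpoint of the interval starting furthest to the right lies in both neighbouring intervals.
If some arc `a` of `c` were redundant, chordlessness would put `arc a` inside the union of its
neighbours' arcs, and since `arc a` is connected the three arcs would share a point.
So `c` is an `S`-cycle on a minimal cover, which is excluded.
-/

/-- A (closed) arc of the circle `ℝ / ℤ`: the image of a closed real interval
of length less than the full circle. -/
def IsArc (A : Set (AddCircle (1 : ℝ))) : Prop :=
  ∃ a b : ℝ, a ≤ b ∧ b - a < 1 ∧ A = (fun x : ℝ => (x : AddCircle (1 : ℝ))) '' Set.Icc a b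

/-- The circular-arc graph of a family of arcs: distinct vertices are adjacent
iff their arcs intersect. -/
def arcGraph {V : Type*} (arc : V → Set (AddCircle (1 : ℝ))) : SimpleGraph V where
  Adj u v := u ≠ v ∧ (arc u ∩ arc v).Nonempty
  symm := ⟨fun _ _ h => ⟨h.1.symm, Set.inter_comm _ _ ▸ h.2⟩⟩
  loopless := ⟨fun _ h => h.1 rfl⟩

/-- `C` is a minimal family of arcs covering the whole circle. -/
def MinCover {V : Type*} (arc : V → Set (AddCircle (1 : ℝ))) (C : Set V) : Prop :=
  (⋃ v ∈ C, arc v) = Set.univ ∧ ∀ C' ⊂ C, (⋃ v ∈ C', arc v) ≠ Set.univ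

/-- A walk is chordless if every edge of the graph between vertices of its
support is an edge of the walk. -/
def Chordless {V : Type*} (G : SimpleGraph V) {v : V} (c : G.Walk v v) : Prop :=
  ∀ u w, u ∈ c.support → w ∈ c.support → G.Adj u w → s(u, w) ∈ c.edges

open SimpleGraph Set

namespace SimpleGraph.Walk

variable {V : Type*} {G : SimpleGraph V}

theorem support_subset_of_edges_closed {u w a : V} (p : G.Walk u w) {T : Set V}
    (ha : a ∈ p.support) (haT : a ∈ T) (hT : ∀ x ∈ T, ∀ y, s(x, y) ∈ p.edges → y ∈ T) :
    ∀ b ∈ p.support, b ∈ T := by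
  classical
  intro b hb
  by_contra hbT
  let q := (p.takeUntil a ha).reverse.append (p.takeUntil b hb)
  obtain ⟨d, hd, hdT, hdT'⟩ := q.exists_boundary_dart T haT hbT
  have hd : d.edge ∈ p.edges := by
    have hd : d.edge ∈ q.edges := List.mem_map_of_mem hd
    simp only [q, edges_append, edges_reverse, List.mem_append, List.mem_reverse] at hd
    exact hd.elim (p.edges_takeUntil_subset_edges ha ·) (p.edges_takeUntil_subset_edges hb ·)
  exact hdT' (hT _ hdT _ hd)

variable {v : V} {c : G.Walk v v}

theorem IsCycle.exists_mem_edges_iff (hc : c.IsCycle) {a : V} (ha : a ∈ c.support) :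
    ∃ u₁ u₂, u₁ ≠ u₂ ∧ ∀ w, s(a, w) ∈ c.edges ↔ w = u₁ ∨ w = u₂ := by
  obtain ⟨u₁, u₂, hne, hnbr⟩ := ncard_eq_two.mp (hc.ncard_neighborSet_toSubgraph_eq_two ha)
  refine ⟨u₁, u₂, hne, fun w => ?_⟩
  rw [← c.mem_edges_toSubgraph, Subgraph.mem_edgeSet, ← Subgraph.mem_neighborSet, hnbr]
  rfl

theorem IsCycle.eq_or_eq_of_mem_edges (hc : c.IsCycle) {x y z w : V} (hy : s(x, y) ∈ c.edges)
    (hz : s(x, z) ∈ c.edges) (hyz : y ≠ z) (hw : s(x, w) ∈ c.edges) : w = y ∨ w = z := by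
  obtain ⟨u₁, u₂, -, hnbr⟩ := hc.exists_mem_edges_iff (c.fst_mem_support_of_mem_edges hy)
  replace hy := (hnbr y).mp hy
  replace hz := (hnbr z).mp hz
  replace hw := (hnbr w).mp hw
  grind

theorem IsCycle.support_subset_triangle (hc : c.IsCycle) {a u₁ u₂ : V}
    (h₁ : s(a, u₁) ∈ c.edges) (h₂ : s(a, u₂) ∈ c.edges) (h₁₂ : s(u₁, u₂) ∈ c.edges) :
    ∀ b ∈ c.support, b ∈ ({a, u₁, u₂} : Set V) := by
  have h₁' : s(u₁, a) ∈ c.edges := Sym2.eq_swap ▸ h₁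
  have h₂' : s(u₂, a) ∈ c.edges := Sym2.eq_swap ▸ h₂
  have h₂₁ : s(u₂, u₁) ∈ c.edges := Sym2.eq_swap ▸ h₁₂
  refine c.support_subset_of_edges_closed (c.fst_mem_support_of_mem_edges h₁) (by simp) ?_
  rintro x (rfl | rfl | rfl) y hy
  · rcases hc.eq_or_eq_of_mem_edges h₁ h₂ (c.adj_of_mem_edges h₁₂).ne hy with rfl | rfl <;> simp
  · rcases hc.eq_or_eq_of_mem_edges h₁' h₁₂ (c.adj_of_mem_edges h₂).ne hy with rfl | rfl <;> simp
  · rcases hc.eq_or_eq_of_mem_edges h₂' h₂₁ (c.adj_of_mem_edges h₁).ne hy with rfl | rfl <;> simp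

end SimpleGraph.Walk

theorem injOn_coe_Ico (t : ℝ) : InjOn (fun x : ℝ => (x : AddCircle (1 : ℝ))) (Ico t (t + 1)) :=
  fun _ hx _ hy h => (AddCircle.coe_eq_coe_iff_of_mem_Ico hx hy).mp h

namespace IsArc

variable {A : Set (AddCircle (1 : ℝ))}

theorem isClosed (hA : IsArc A) : IsClosed A := by
  obtain ⟨a, b, -, -, rfl⟩ := hA
  exact (isCompact_Icc.image (AddCircle.continuous_mk' 1)).isClosed

theorem isPreconnected (hA : IsArc A) : IsPreconnected A := by
  obtain ⟨a, b, -, -, rfl⟩ := hA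
  exact isPreconnected_Icc.image _ (AddCircle.continuous_mk' 1).continuousOn

theorem exists_eq_image_Icc_of_notMem (hA : IsArc A) {t : ℝ} (ht : (t : AddCircle (1 : ℝ)) ∉ A) :
    ∃ a b, t ≤ a ∧ a ≤ b ∧ b < t + 1 ∧
      A = (fun x : ℝ => (x : AddCircle (1 : ℝ))) '' Icc a b := by
  obtain ⟨a₀, b₀, hab, -, rfl⟩ := hA
  set n := toIcoDiv one_pos t a₀
  have hshift : (fun x : ℝ => (x : AddCircle (1 : ℝ))) '' Icc (a₀ - n • 1) (b₀ - n • 1) =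
      (fun x : ℝ => (x : AddCircle (1 : ℝ))) '' Icc a₀ b₀ := by
    rw [← image_sub_const_Icc, image_image]
    congr 1
    ext x
    simp
  have ha := toIcoMod_mem_Ico one_pos t a₀
  rw [← self_sub_toIcoDiv_zsmul] at ha
  refine ⟨a₀ - n • 1, b₀ - n • 1, ha.1, by linarith, ?_, hshift.symm⟩
  by_contra! hb
  refine ht (hshift ▸ ⟨t + 1, ⟨ha.2.le, hb⟩, ?_⟩)
  simp

end IsArc

theorem exists_mem_arc_of_inter_nonempty_of_notMem {ι : Type*} (s : Finset ι) (hs : s.Nonempty)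
    (arc : ι → Set (AddCircle (1 : ℝ))) (harc : ∀ i ∈ s, IsArc (arc i))
    {p : AddCircle (1 : ℝ)} (hp : ∀ i ∈ s, p ∉ arc i) :
    ∃ a ∈ s, ∃ q ∈ arc a, ∀ i ∈ s, (arc a ∩ arc i).Nonempty → q ∈ arc i := by
  obtain ⟨t, rfl⟩ := QuotientAddGroup.mk_surjective p
  have hlift := fun i hi => (harc i hi).exists_eq_image_Icc_of_notMem (hp i hi)
  choose! l r htl hlr hrt harc_eq using hlift
  have hwindow : ∀ i ∈ s, Icc (l i) (r i) ⊆ Ico t (t + 1) :=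
    fun i hi => Icc_subset_Ico (htl i hi) (hrt i hi)
  obtain ⟨a, ha, hmax⟩ := s.exists_max_image l hs
  refine ⟨a, ha, l a, harc_eq a ha ▸ mem_image_of_mem _ ⟨le_rfl, hlr a ha⟩, fun i hi hai => ?_⟩
  rw [harc_eq a ha, harc_eq i hi, ← (injOn_coe_Ico t).image_inter (hwindow a ha)
    (hwindow i hi)] at hai
  obtain ⟨x, hxa, hxi⟩ := hai.of_image
  exact harc_eq i hi ▸ mem_image_of_mem _ ⟨hmax i hi, hxa.1.trans hxi.2⟩

section ChordlessCycle

variable {V : Type*} {arc : V → Set (AddCircle (1 : ℝ))} {v : V} {c : (arcGraph arc).Walk v v}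

theorem inter_arc_cycle_nbrs_eq_empty (hc : c.IsCycle) (hch : Chordless (arcGraph arc) c)
    (hno : ¬∃ p, ∀ u ∈ c.support, p ∈ arc u) {a u₁ u₂ : V} (h₁ : s(a, u₁) ∈ c.edges)
    (h₂ : s(a, u₂) ∈ c.edges) (hne : u₁ ≠ u₂) : arc a ∩ (arc u₁ ∩ arc u₂) = ∅ := by
  refine eq_empty_of_forall_notMem fun q ⟨hqa, hq₁, hq₂⟩ => hno ⟨q, fun b hb => ?_⟩
  have h₁₂ : s(u₁, u₂) ∈ c.edges := hch _ _ (c.snd_mem_support_of_mem_edges h₁)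
    (c.snd_mem_support_of_mem_edges h₂) ⟨hne, q, hq₁, hq₂⟩
  rcases hc.support_subset_triangle h₁ h₂ h₁₂ b hb with rfl | rfl | rfl <;> assumption

variable (harc : ∀ u, IsArc (arc u)) (hc : c.IsCycle) (hch : Chordless (arcGraph arc) c)
  (hno : ¬∃ p, ∀ u ∈ c.support, p ∈ arc u)
include harc hc hch hno

theorem iUnion_arc_support_eq_univ : (⋃ u ∈ {x | x ∈ c.support}, arc u) = univ := by
  classical
  by_contra hcov
  obtain ⟨p, hp⟩ := (ne_univ_iff_exists_notMem _).mp hcov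
  simp only [mem_iUnion, mem_ofPred_eq, not_exists] at hp
  obtain ⟨a, ha, q, hqa, hq⟩ := exists_mem_arc_of_inter_nonempty_of_notMem c.support.toFinset
    ⟨v, by simp⟩ arc (fun i _ => harc i) (fun i hi => hp i (List.mem_toFinset.mp hi))
  rw [List.mem_toFinset] at ha
  have hq : ∀ u, s(a, u) ∈ c.edges → q ∈ arc u := fun u hu =>
    hq u (List.mem_toFinset.mpr (c.snd_mem_support_of_mem_edges hu)) (c.adj_of_mem_edges hu).2
  obtain ⟨u₁, u₂, hne, hnbr⟩ := hc.exists_mem_edges_iff ha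
  have h₁ := (hnbr u₁).mpr (Or.inl rfl)
  have h₂ := (hnbr u₂).mpr (Or.inr rfl)
  exact (eq_empty_iff_forall_notMem.mp (inter_arc_cycle_nbrs_eq_empty hc hch hno h₁ h₂ hne) q)
    ⟨hqa, hq _ h₁, hq _ h₂⟩

theorem iUnion_arc_ne_univ_of_ssubset_support {C : Set V} (hC : C ⊂ {x | x ∈ c.support}) :
    (⋃ u ∈ C, arc u) ≠ univ := by
  intro hcov
  obtain ⟨a, ha, haC⟩ := exists_of_ssubset hC
  obtain ⟨u₁, u₂, hne, hnbr⟩ := hc.exists_mem_edges_iff ha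
  have hsub : arc a ⊆ arc u₁ ∪ arc u₂ := by
    intro z hz
    obtain ⟨w, hwC, hzw⟩ := mem_iUnion₂.mp (hcov ▸ mem_univ z)
    have hw : s(a, w) ∈ c.edges := hch a w ha (hC.1 hwC) ⟨fun h => haC (h ▸ hwC), z, hz, hzw⟩
    rcases (hnbr w).mp hw with rfl | rfl
    exacts [Or.inl hzw, Or.inr hzw]
  have h₁ := (hnbr u₁).mpr (Or.inl rfl)
  have h₂ := (hnbr u₂).mpr (Or.inr rfl)
  exact nonempty_iff_ne_empty.mp (isPreconnected_closed_iff.mp (harc a).isPreconnected _ _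
      (harc u₁).isClosed (harc u₂).isClosed hsub (c.adj_of_mem_edges h₁).2
      (c.adj_of_mem_edges h₂).2)
    (inter_arc_cycle_nbrs_eq_empty hc hch hno h₁ h₂ hne)

end ChordlessCycle

theorem stmt_6_general {V : Type*} (arc : V → Set (AddCircle (1 : ℝ)))
    (harc : ∀ v, IsArc (arc v))
    (S : Set V)
    (hnoSCycleCover : ∀ C : Set V, MinCover arc C →
      ¬ ∃ (v : V) (c : (arcGraph arc).Walk v v), c.IsCycle ∧ Chordless (arcGraph arc) c ∧
          (∀ u ∈ c.support, u ∈ C) ∧ ∃ u ∈ c.support, u ∈ S) :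
    ∀ (v : V) (c : (arcGraph arc).Walk v v), c.IsCycle → Chordless (arcGraph arc) c →
      (∃ u ∈ c.support, u ∈ S) → ∃ p : AddCircle (1 : ℝ), ∀ u ∈ c.support, p ∈ arc u := by
  intro v c hc hch hS
  by_contra hno
  have hmin : MinCover arc {x | x ∈ c.support} :=
    ⟨iUnion_arc_support_eq_univ harc hc hch hno,
      fun _ hC => iUnion_arc_ne_univ_of_ssubset_support harc hc hch hno hC⟩
  exact hnoSCycleCover _ hmin ⟨v, c, hc, hch, fun _ => id, hS⟩

/-- If the arcs cover the circle, every vertex has a neighbour in `S`, and no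
minimal covering family of arcs carries an induced `S`-cycle, then every
induced `S`-cycle of the circular-arc graph lies inside `A_p`, the set of arcs
through a single point `p` of the circle. -/
theorem stmt_6 {V : Type*} (arc : V → Set (AddCircle (1 : ℝ)))
    (harc : ∀ v, IsArc (arc v))
    (hcover : (⋃ v, arc v) = Set.univ)
    (S : Set V)
    (hdom : ∀ v, ∃ s ∈ S, (arcGraph arc).Adj v s)
    (hnoSCycleCover : ∀ C : Set V, MinCover arc C →
      ¬ ∃ (v : V) (c : (arcGraph arc).Walk v v), c.IsCycle ∧ Chordless (arcGraph arc) c ∧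
          (∀ u ∈ c.support, u ∈ C) ∧ ∃ u ∈ c.support, u ∈ S) :
    ∀ (v : V) (c : (arcGraph arc).Walk v v), c.IsCycle → Chordless (arcGraph arc) c →
      (∃ u ∈ c.support, u ∈ S) → ∃ p : AddCircle (1 : ℝ), ∀ u ∈ c.support, p ∈ arc u :=
  stmt_6_general arc harc S hnoSCycleCover
end

section
/- Let G be a permutation graph given by total orders <_t and <_b, and let i, j, g, h be vertices such that i <_t j, j <_b i (so ij is a crossing pair/edge), g <_t j, h <_t j, g <_b i, h <_b i, g is adjacent to j but not to i, and h is adjacent to i but not to j. Then g and h are adjacent, and ⟨g, h, i, j⟩ is an induced 4-cycle in G. -/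
/-- Adjacency in a permutation diagram with top order `tlt` and bottom order
`blt`: two vertices are adjacent iff the two orders disagree on them. -/
def PermAdj {V : Type*} (tlt blt : V → V → Prop) (u v : V) : Prop :=
  (tlt u v ∧ blt v u) ∨ (tlt v u ∧ blt u v)

/-- In a permutation graph, if `ij` is a crossing pair, `g, h` precede both
`i` (bottom) and `j` (top), `g` is adjacent to `j` but not `i`, and `h` is
adjacent to `i` but not `j`, then `g` and `h` are adjacent and `⟨g,h,i,j⟩` is
an induced 4-cycle. -/
theorem stmt_9 {V : Type*} (tlt blt : V → V → Prop)
    [IsStrictTotalOrder V tlt] [IsStrictTotalOrder V blt]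
    (i j g h : V)
    (hij_t : tlt i j) (hij_b : blt j i)
    (hg_t : tlt g j) (hh_t : tlt h j) (hg_b : blt g i) (hh_b : blt h i)
    (hgj : PermAdj tlt blt g j) (hgi : ¬ PermAdj tlt blt g i)
    (hhi : PermAdj tlt blt h i) (hhj : ¬ PermAdj tlt blt h j) :
    PermAdj tlt blt g h ∧
      PermAdj tlt blt h i ∧ PermAdj tlt blt i j ∧ PermAdj tlt blt j g ∧
      ¬ PermAdj tlt blt g i ∧ ¬ PermAdj tlt blt h j := by
  have bjg : blt j g := by
    rcases hgj with ⟨_, hb⟩ | ⟨ht, _⟩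
    · exact hb
    · exact absurd hg_t (asymm ht)
  have tih : tlt i h := by
    rcases hhi with ⟨_, hb⟩ | ⟨ht, _⟩
    · exact absurd hh_b (asymm hb)
    · exact ht
  have tgi : tlt g i := by
    rcases trichotomous_of tlt g i with h1 | h1 | h1
    · exact h1
    · subst h1; exact absurd hg_b (irrefl_of blt _)
    · exact absurd (Or.inr ⟨h1, hg_b⟩) hgi
  have bhj : blt h j := by
    rcases trichotomous_of blt h j with h1 | h1 | h1
    · exact h1
    · subst h1; exact absurd hh_t (irrefl_of tlt _)
    · exact absurd (Or.inl ⟨hh_t, h1⟩) hhj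
  refine ⟨Or.inl ⟨trans_of tlt tgi tih, trans_of blt bhj bjg⟩,
    hhi, Or.inl ⟨hij_t, hij_b⟩, Or.inr ⟨hg_t, bjg⟩, hgi, hhj⟩
end

section
/- Let G be a co-bipartite graph with clique partition (A,B), S ⊆ V, and let F be an S-forest with F ∩ A ∩ S = {a_S, a'_S} (two distinct vertices). Then F contains no vertex of A \ S, and F ∩ B contains at most one vertex adjacent to a_S or a'_S, i.e., |F ∩ (N(a_S) ∪ N(a'_S)) ∩ B| ≤ 1. -/
/-- `Y` is an `S`-forest of `G`: no cycle of the induced subgraph `G[Y]`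
contains a vertex of `S`. -/
def SForest {V : Type*} (G : SimpleGraph V) (S Y : Set V) : Prop :=
  ∀ (v : Y) (c : (G.induce Y).Walk v v), c.IsCycle → ∀ u ∈ c.support, (u : V) ∉ S

open SimpleGraph

lemma triangle_isCycle {W : Type*} {G : SimpleGraph W} {a b c : W}
    (hab : G.Adj a b) (hbc : G.Adj b c) (hca : G.Adj c a) :
    (Walk.cons hab (Walk.cons hbc (Walk.cons hca Walk.nil))).IsCycle := by
  have h1 := hab.ne; have h2 := hbc.ne; have h3 := hca.ne
  simp [Walk.isCycle_def, Walk.isTrail_def, Sym2.eq_iff]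
  tauto

lemma square_isCycle {W : Type*} {G : SimpleGraph W} {a b c d : W}
    (hab : G.Adj a b) (hbc : G.Adj b c) (hcd : G.Adj c d) (hda : G.Adj d a)
    (hac : a ≠ c) (hbd : b ≠ d) :
    (Walk.cons hab (Walk.cons hbc (Walk.cons hcd (Walk.cons hda Walk.nil)))).IsCycle := by
  have h1 := hab.ne; have h2 := hbc.ne; have h3 := hcd.ne; have h4 := hda.ne
  simp [Walk.isCycle_def, Walk.isTrail_def, Sym2.eq_iff]
  tauto

lemma no_triangle {V : Type*} {G : SimpleGraph V} {S F : Set V} (hF : SForest G S F)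
    {a b c : V} (ha : a ∈ F) (hb : b ∈ F) (hc : c ∈ F)
    (hab : G.Adj a b) (hbc : G.Adj b c) (hca : G.Adj c a) (haS : a ∈ S) : False := by
  have hab' : (G.induce F).Adj ⟨a, ha⟩ ⟨b, hb⟩ := hab
  have hbc' : (G.induce F).Adj ⟨b, hb⟩ ⟨c, hc⟩ := hbc
  have hca' : (G.induce F).Adj ⟨c, hc⟩ ⟨a, ha⟩ := hca
  exact hF ⟨a, ha⟩ (Walk.cons hab' (Walk.cons hbc' (Walk.cons hca' Walk.nil)))
    (triangle_isCycle hab' hbc' hca') ⟨a, ha⟩ (by simp) haS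

lemma no_square {V : Type*} {G : SimpleGraph V} {S F : Set V} (hF : SForest G S F)
    {a b c d : V} (ha : a ∈ F) (hb : b ∈ F) (hc : c ∈ F) (hd : d ∈ F)
    (hab : G.Adj a b) (hbc : G.Adj b c) (hcd : G.Adj c d) (hda : G.Adj d a)
    (hac : a ≠ c) (hbd : b ≠ d) (haS : a ∈ S) : False := by
  have hab' : (G.induce F).Adj ⟨a, ha⟩ ⟨b, hb⟩ := hab
  have hbc' : (G.induce F).Adj ⟨b, hb⟩ ⟨c, hc⟩ := hbc
  have hcd' : (G.induce F).Adj ⟨c, hc⟩ ⟨d, hd⟩ := hcd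
  have hda' : (G.induce F).Adj ⟨d, hd⟩ ⟨a, ha⟩ := hda
  exact hF ⟨a, ha⟩ (Walk.cons hab' (Walk.cons hbc' (Walk.cons hcd' (Walk.cons hda' Walk.nil))))
    (square_isCycle hab' hbc' hcd' hda' (by simpa [Subtype.ext_iff] using hac)
      (by simpa [Subtype.ext_iff] using hbd)) ⟨a, ha⟩ (by simp) haS

/-- In a co-bipartite graph with clique partition `(A, B)`, if an `S`-forest
`F` satisfies `F ∩ A ∩ S = {a_S, a'_S}` with `a_S ≠ a'_S`, then `F` contains
no vertex of `A \ S` and at most one vertex of `B` adjacent to `a_S` or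
`a'_S`. -/
theorem stmt_15 {V : Type*} (G : SimpleGraph V) (A B S F : Set V)
    (hpart : A ∪ B = Set.univ) (hdisj : A ∩ B = ∅)
    (hA : G.IsClique A) (hB : G.IsClique B)
    (hF : SForest G S F)
    (aS aS' : V) (hne : aS ≠ aS')
    (hFA : F ∩ A ∩ S = {aS, aS'}) :
    F ∩ (A \ S) = ∅ ∧
      (F ∩ (G.neighborSet aS ∪ G.neighborSet aS') ∩ B).ncard ≤ 1 := by
  have hmem : aS ∈ F ∩ A ∩ S := by rw [hFA]; left; rfl
  have hmem' : aS' ∈ F ∩ A ∩ S := by rw [hFA]; right; rfl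
  obtain ⟨⟨haF, haA⟩, haS⟩ := hmem
  obtain ⟨⟨ha'F, ha'A⟩, ha'S⟩ := hmem'
  have hadj : G.Adj aS aS' := hA haA ha'A hne
  have hAB : ∀ x ∈ A, ∀ y ∈ B, x ≠ y := by
    rintro x hx y hy rfl
    have : x ∈ A ∩ B := ⟨hx, hy⟩
    rw [hdisj] at this
    exact this
  constructor
  · ext x
    simp only [Set.mem_inter_iff, Set.mem_diff, Set.mem_empty_iff_false, iff_false]
    rintro ⟨hxF, hxA, hxS⟩
    have hx1 : aS ≠ x := fun h => hxS (h ▸ haS)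
    have hx2 : aS' ≠ x := fun h => hxS (h ▸ ha'S)
    exact no_triangle hF haF ha'F hxF hadj (hA ha'A hxA hx2) (hA hxA haA hx1.symm) haS
  · have hsub : (F ∩ (G.neighborSet aS ∪ G.neighborSet aS') ∩ B).Subsingleton := by
      rintro b ⟨⟨hbF, hbN⟩, hbB⟩ b' ⟨⟨hb'F, hb'N⟩, hb'B⟩
      by_contra hbb'
      have hbb : G.Adj b b' := hB hbB hb'B hbb'
      rcases hbN with hb1 | hb1 <;> rcases hb'N with hb2 | hb2
      · exact no_triangle hF haF hbF hb'F hb1 hbb hb2.symm haS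
      · exact no_square hF haF hbF hb'F ha'F hb1 hbb hb2.symm hadj.symm
          (hAB aS haA b' hb'B) (fun h => hAB aS' ha'A b hbB h.symm) haS
      · exact no_square hF ha'F hbF hb'F haF hb1 hbb hb2.symm hadj
          (hAB aS' ha'A b' hb'B) (fun h => hAB aS haA b hbB h.symm) ha'S
      · exact no_triangle hF ha'F hbF hb'F hb1 hbb hb2.symm ha'S
    rcases hsub.eq_empty_or_singleton with h | ⟨x, h⟩ <;> simp [h]
end

section
/- Let G be a permutation graph with orders <_t, <_b. Let i be a vertex and x, y be vertices with x <_t y, y <_b x (a crossing pair), i <_t y, i <_b x, and i adjacent to both x and y. Then x <_t i <_t y and y <_b i <_b x, and the neighborhood of i within V_{ii} ∪ {x,y} is exactly {x,y}, where V_{ii} = {h : h <_t i and h <_b i} ∪ {i}; consequently if x, y, i ∉ S then no subset of V_{ii} ∪ {x,y} containing i induces an S-cycle. -/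
/-- The permutation graph determined by a top order `tlt` and a bottom order
`blt`. -/
def permGraph {V : Type*} (tlt blt : V → V → Prop) : SimpleGraph V where
  Adj u v := u ≠ v ∧ ((tlt u v ∧ blt v u) ∨ (tlt v u ∧ blt u v))
  symm := ⟨fun _ _ h => ⟨h.1.symm, h.2.symm⟩⟩
  loopless := ⟨fun _ h => h.1 rfl⟩

/-!
In a permutation graph, `i <_t y` forces the crossing edge `iy` to have `y <_b i`, and `i <_b x`
forces `x <_t i`; a vertex below `i` in both orders crosses nothing with `i`. So inside
`V_{ii} ∪ {x, y}` the only neighbours of `i` are `x` and `y`, which are adjacent to each other.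
On a chordless cycle every vertex has exactly two cycle-neighbours, namely its graph-neighbours on
the cycle. Hence the cycle-neighbours of `i`, `x`, `y` all lie in `{i, x, y}`, and by connectedness
a chordless cycle through `i` in `V_{ii} ∪ {x, y}` is the triangle `i x y`.
-/

namespace permGraph

variable {V : Type*} {tlt blt : V → V → Prop} {u v : V}

theorem blt_of_adj_of_tlt [Std.Asymm tlt] (h : (permGraph tlt blt).Adj u v) (huv : tlt u v) :
    blt v u :=
  h.2.elim And.right fun h' => absurd huv (asymm h'.1)

theorem tlt_of_adj_of_blt [Std.Asymm blt] (h : (permGraph tlt blt).Adj u v) (huv : blt u v) :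
    tlt v u :=
  h.2.elim (fun h' => absurd huv (asymm h'.2)) And.left

theorem adj_of_tlt_of_blt [Std.Asymm tlt] (ht : tlt u v) (hb : blt v u) :
    (permGraph tlt blt).Adj u v :=
  ⟨fun h => asymm ht (h ▸ ht), Or.inl ⟨ht, hb⟩⟩

theorem not_adj_of_tlt_of_blt [Std.Asymm tlt] [Std.Asymm blt] (ht : tlt v u) (hb : blt v u) :
    ¬(permGraph tlt blt).Adj u v :=
  fun h => asymm hb (blt_of_adj_of_tlt h.symm ht)

end permGraph

namespace SimpleGraph.Walk

variable {V : Type*} {G : SimpleGraph V}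

theorem mem_of_mem_support_of_toSubgraph_closed {u v : V} {T : Set V} (p : G.Walk u v)
    (hu : u ∈ T) (hT : ∀ a ∈ T, ∀ b, p.toSubgraph.Adj a b → b ∈ T) :
    ∀ w ∈ p.support, w ∈ T := by
  induction p with
  | nil => simpa using hu
  | @cons a b _ h q ih =>
    have hq : ∀ a ∈ T, ∀ b, q.toSubgraph.Adj a b → b ∈ T := fun a ha b hab =>
      hT a ha b (Or.inr hab)
    have hstart : b ∈ T := hT a hu b (by simp)
    simpa [hu] using ih hstart hq

theorem toSubgraph_adj_iff_adj_of_chordless {v a b : V} {c : G.Walk v v} (hch : Chordless G c)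
    (ha : a ∈ c.support) (hb : b ∈ c.support) : c.toSubgraph.Adj a b ↔ G.Adj a b :=
  ⟨fun h => h.adj_sub, fun h => adj_toSubgraph_iff_mem_edges.mpr (hch a b ha hb h)⟩

theorem IsCycle.mem_triangle_of_chordless {v i x y : V} {c : G.Walk v v} (hc : c.IsCycle)
    (hch : Chordless G c) (hi : i ∈ c.support) (hxy : G.Adj x y)
    (hnb : ∀ u ∈ c.support, G.Adj i u → u = x ∨ u = y) :
    ∀ u ∈ c.support, u = i ∨ u = x ∨ u = y := by
  classical
  have hfin (a : V) := c.finite_neighborSet_toSubgraph (w := a)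
  have hNi : c.toSubgraph.neighborSet i = {x, y} := by
    refine Set.eq_of_subset_of_ncard_le (fun b hb => ?_) ?_ (Set.toFinite _)
    · have hbs := mem_support_of_adj_toSubgraph hb.symm
      exact hnb b hbs ((toSubgraph_adj_iff_adj_of_chordless hch hi hbs).mp hb)
    · rw [Set.ncard_pair hxy.ne, hc.ncard_neighborSet_toSubgraph_eq_two hi]
  have hix : c.toSubgraph.Adj i x := show x ∈ c.toSubgraph.neighborSet i by simp [hNi]
  have hiy : c.toSubgraph.Adj i y := show y ∈ c.toSubgraph.neighborSet i by simp [hNi]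
  have hxs := mem_support_of_adj_toSubgraph hix.symm
  have hys := mem_support_of_adj_toSubgraph hiy.symm
  have hxy' := (toSubgraph_adj_iff_adj_of_chordless hch hxs hys).mpr hxy
  have hpair {a b d : V} (had : c.toSubgraph.Adj a b) (hbd : c.toSubgraph.Adj a d) (hne : b ≠ d)
      (ha : a ∈ c.support) : c.toSubgraph.neighborSet a = {b, d} := by
    have hsub : ({b, d} : Set V) ⊆ c.toSubgraph.neighborSet a :=
      Set.insert_subset had (Set.singleton_subset_iff.mpr hbd)
    refine (Set.eq_of_subset_of_ncard_le hsub ?_ (hfin a)).symm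
    rw [Set.ncard_pair hne, hc.ncard_neighborSet_toSubgraph_eq_two ha]
  have hNx := hpair hix.symm hxy' hiy.ne hxs
  have hNy := hpair hiy.symm hxy'.symm hix.ne hys
  have hclosed : ∀ a ∈ ({i, x, y} : Set V), c.toSubgraph.neighborSet a ⊆ {i, x, y} := by
    rintro a (rfl | rfl | rfl) <;> simp [hNi, hNx, hNy, Set.insert_subset_iff]
  intro u hu
  refine (c.rotate i hi).mem_of_mem_support_of_toSubgraph_closed (by simp)
    (fun a ha b hab => hclosed a ha ?_) u ((mem_support_rotate_iff c i hi).mpr hu)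
  rwa [toSubgraph_rotate] at hab

end SimpleGraph.Walk

open permGraph in
/-- Let `xy` be a crossing pair with `i <_t y`, `i <_b x`, and `i` adjacent to
both `x` and `y`.  Then `x <_t i <_t y` and `y <_b i <_b x`; the neighbourhood
of `i` in `V_{ii} ∪ {x,y}` is exactly `{x,y}`, where
`V_{ii} = {h | h <_t i ∧ h <_b i} ∪ {i}`; and if `x, y, i ∉ S` then no induced
cycle of `G` lying in `V_{ii} ∪ {x,y}` and passing through `i` contains a
vertex of `S`. -/
theorem stmt_17 {V : Type*} (tlt blt : V → V → Prop)
    [IsStrictTotalOrder V tlt] [IsStrictTotalOrder V blt]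
    (S : Set V) (i x y : V)
    (hxy_t : tlt x y) (hxy_b : blt y x)
    (hi_t : tlt i y) (hi_b : blt i x)
    (hix : (permGraph tlt blt).Adj i x) (hiy : (permGraph tlt blt).Adj i y) :
    (tlt x i ∧ tlt i y ∧ blt y i ∧ blt i x) ∧
      (∀ v ∈ ({h : V | tlt h i ∧ blt h i} ∪ {i}) ∪ {x, y},
        ((permGraph tlt blt).Adj i v ↔ v = x ∨ v = y)) ∧
      (x ∉ S → y ∉ S → i ∉ S →
        ∀ (v : V) (c : (permGraph tlt blt).Walk v v), c.IsCycle →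
          Chordless (permGraph tlt blt) c →
          (∀ u ∈ c.support, u ∈ ({h : V | tlt h i ∧ blt h i} ∪ {i}) ∪ {x, y}) →
          i ∈ c.support → ∀ u ∈ c.support, u ∉ S) := by
  have hN : ∀ v ∈ ({h : V | tlt h i ∧ blt h i} ∪ {i}) ∪ {x, y},
      ((permGraph tlt blt).Adj i v ↔ v = x ∨ v = y) := by
    refine fun v hv => ⟨fun hadj => ?_, by rintro (rfl | rfl) <;> assumption⟩
    rcases hv with (⟨ht, hb⟩ | rfl) | hv
    · exact absurd hadj (not_adj_of_tlt_of_blt ht hb)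
    · exact absurd hadj (SimpleGraph.irrefl _)
    · exact hv
  refine ⟨⟨tlt_of_adj_of_blt hix hi_b, hi_t, blt_of_adj_of_tlt hiy hi_t, hi_b⟩, hN, ?_⟩
  intro hxS hyS hiS v c hc hch hsub hi u hu
  rcases hc.mem_triangle_of_chordless hch hi (adj_of_tlt_of_blt hxy_t hxy_b)
      (fun w hw => (hN w (hsub w hw)).mp) u hu with rfl | rfl | rfl <;> assumption
end

section
/- Let G be an interval graph (with distinct endpoints) and let i, x be overlapping intervals with r(i) < r(x). Let x' be the one of {i,x} with smaller left endpoint and y' the other. If i ∈ S or x ∈ S, then for any interval h with r(h) < r(i): if h overlaps y' then {h, x', y'} induces an S-triangle in G. -/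
/-- Intervals `i = [l i, r i]` and `j = [l j, r j]` overlap. -/
def Overlap {V : Type*} (l r : V → ℝ) (i j : V) : Prop :=
  l i < r j ∧ l j < r i

/-- Let `i, x` be overlapping intervals with `r i < r x`, let `x'` be the one
of `{i, x}` with the smaller left endpoint and `y'` the other.  If `i ∈ S` or
`x ∈ S`, then for any interval `h` with `r h < r i` overlapping `y'`, the set
`{h, x', y'}` induces a triangle containing a vertex of `S` (an `S`-triangle). -/
theorem stmt_19 {V : Type*} (l r : V → ℝ) (hproper : ∀ v, l v < r v)
    (S : Set V) (i x x' y' h : V)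
    (hov : Overlap l r i x) (hrx : r i < r x)
    (hchoice : (x' = i ∧ y' = x) ∨ (x' = x ∧ y' = i))
    (hleft : l x' < l y')
    (hS : i ∈ S ∨ x ∈ S)
    (hh : r h < r i) (hhy : Overlap l r h y') :
    Overlap l r h x' ∧ Overlap l r h y' ∧ Overlap l r x' y' ∧
      (h ∈ S ∨ x' ∈ S ∨ y' ∈ S) := by
  have hhp := hproper h
  rcases hchoice with ⟨hx', hy'⟩ | ⟨hx', hy'⟩ <;> subst hx' <;> subst hy' <;>
    refine ⟨⟨by linarith [hhy.1, hhy.2], by linarith [hhy.1, hhy.2]⟩, hhy, ?_, ?_⟩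
  · exact hov
  · tauto
  · exact ⟨hov.2, hov.1⟩
  · tauto
end
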